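/- arXiv:1204.4420 — 4 statements merged into one kernel-verified Lean document; each statement's English description precedes it below -/
import Mathlib

section
/- There exists a constant C > 0 such that for every integer n ≥ 1 and every integer k with 0 ≤ k ≤ n, setting μ = 2k/n − 1, the binomial coefficient satisfies C(n,k) ≥ (1/C) · (2^n/√n) · exp(−n·𝓘(μ)). -/
/-- The entropy function 𝓘(x) = ((1+x)log(1+x) + (1-x)log(1-x))/2.
Note `Real.log 0 = 0` in Mathlib, which implements the convention 0·log 0 = 0. -/
noncomputable def entI (x : ℝ) : ℝ :=
  ((1 + x) * Real.log (1 + x) + (1 - x) * Real.log (1 - x)) / 2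

/-!
Write `n = k + m`. Stirling's formula bounds `n!` below by `√(2πn) (n/e)^n`, and `k!`, `m!`
above by `e √(k+1) (k/e)^k`, `e √(m+1) (m/e)^m`; the shift `k + 1` keeps the upper bound valid
at `k = 0`, so the endpoints `μ = ±1` need no separate treatment. Hence
`C(n,k) ≳ n^n / (√n k^k m^m)`, while `exp (-n 𝓘(μ)) = n^n / (2^n k^k m^m)` exactly, the
convention `0^0 = 1` matching `0 log 0 = 0`.
-/

open Real
open scoped Nat

lemma factorial_le_exp_one_mul_sqrt_succ (n : ℕ) :
    (n ! : ℝ) ≤ exp 1 * √(n + 1) * (n / exp 1) ^ n := by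
  rcases Nat.eq_zero_or_pos n with rfl | hn
  · simp [one_le_exp zero_le_one]
  have h_seq : Stirling.stirlingSeq n ≤ exp 1 / √2 := by
    obtain ⟨j, rfl⟩ := Nat.exists_eq_add_of_le' hn
    simpa [Stirling.stirlingSeq_one] using Stirling.stirlingSeq'_antitone (Nat.zero_le j)
  have h_den : 0 < √(2 * n) * (n / exp 1) ^ n := by positivity
  calc (n ! : ℝ) = Stirling.stirlingSeq n * (√(2 * n) * (n / exp 1) ^ n) := by
        rw [Stirling.stirlingSeq, div_mul_cancel₀ _ h_den.ne']
    _ ≤ exp 1 / √2 * (√(2 * n) * (n / exp 1) ^ n) := by gcongr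
    _ = exp 1 * √n * (n / exp 1) ^ n := by
        rw [sqrt_mul zero_le_two]; field_simp
    _ ≤ exp 1 * √(n + 1) * (n / exp 1) ^ n := by gcongr; linarith

lemma sqrt_succ_mul_sqrt_succ_le (k m : ℕ) (h : k + m ≠ 0) :
    √(k + 1 : ℝ) * √(m + 1) ≤ 2 * (k + m : ℕ) := by
  rw [← sqrt_mul (by positivity)]
  refine sqrt_le_iff.mpr ⟨by positivity, ?_⟩
  have h1 : (1 : ℝ) ≤ (k + m : ℕ) := by exact_mod_cast Nat.one_le_iff_ne_zero.mpr h
  push_cast at h1 ⊢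
  nlinarith [sq_nonneg ((k : ℝ) - m)]

lemma le_add_choose_stirling (k m : ℕ) (h : k + m ≠ 0) :
    √(2 * π) / (2 * exp 1 ^ 2) *
        (((k + m : ℕ) : ℝ) ^ (k + m) / (√(k + m : ℕ) * (k : ℝ) ^ k * (m : ℝ) ^ m))
      ≤ ((k + m).choose k : ℝ) := by
  set n : ℝ := ((k + m : ℕ) : ℝ)
  have hn : 0 < n := by positivity
  have h_choose : ((k + m).choose k : ℝ) = (k + m)! / (k ! * m !) := by
    rw [eq_div_iff (by positivity), ← mul_assoc]
    have := Nat.choose_mul_factorial_mul_factorial (Nat.le_add_right k m)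
    rw [Nat.add_sub_cancel_left] at this
    exact_mod_cast this
  have h_den : (k ! * m ! : ℝ) ≤
      exp 1 * √(k + 1) * (k / exp 1) ^ k * (exp 1 * √(m + 1) * (m / exp 1) ^ m) :=
    mul_le_mul (factorial_le_exp_one_mul_sqrt_succ k) (factorial_le_exp_one_mul_sqrt_succ m)
      (by positivity) (by positivity)
  have hk : 0 < (k : ℝ) ^ k := mod_cast Nat.pow_self_pos
  have hm : 0 < (m : ℝ) ^ m := mod_cast Nat.pow_self_pos
  calc √(2 * π) / (2 * exp 1 ^ 2) * (n ^ (k + m) / (√n * (k : ℝ) ^ k * (m : ℝ) ^ m))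
      = √(2 * π * n) * (n / exp 1) ^ (k + m) /
          (2 * n * (exp 1 * (k ^ k / exp 1 ^ k) * (exp 1 * (m ^ m / exp 1 ^ m)))) := by
        rw [sqrt_mul (by positivity) n, div_pow, pow_add]
        field_simp
        rw [sq_sqrt hn.le]
        ring
    _ ≤ √(2 * π * n) * (n / exp 1) ^ (k + m) /
          (√(k + 1) * √(m + 1) * (exp 1 * (k ^ k / exp 1 ^ k) * (exp 1 * (m ^ m / exp 1 ^ m)))) := by
        gcongr _ / (?_ * _)
        exact sqrt_succ_mul_sqrt_succ_le k m h
    _ = √(2 * π * n) * (n / exp 1) ^ (k + m) /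
          (exp 1 * √(k + 1) * (k / exp 1) ^ k * (exp 1 * √(m + 1) * (m / exp 1) ^ m)) := by
        ring
    _ ≤ (k + m)! / (k ! * m !) :=
        div_le_div₀ (by positivity) (Stirling.le_factorial_stirling (k + m)) (by positivity) h_den
    _ = ((k + m).choose k : ℝ) := h_choose.symm

lemma exp_natCast_mul_log_natCast (k : ℕ) : exp (k * log k) = (k : ℝ) ^ k := by
  rcases Nat.eq_zero_or_pos k with rfl | hk
  · simp
  · rw [exp_nat_mul, exp_log (Nat.cast_pos.mpr hk)]

lemma mul_log_mul_div {x : ℝ} (hx : 0 ≤ x) {c d : ℝ} (hc : 0 < c) (hd : 0 < d) :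
    x * log (c * x / d) = x * log c + x * log x - x * log d := by
  rcases hx.eq_or_lt with rfl | hx
  · simp
  · rw [log_div (by positivity) hd.ne', log_mul hc.ne' hx.ne']; ring

lemma natCast_add_mul_entI (k m : ℕ) (h : k + m ≠ 0) :
    ((k + m : ℕ) : ℝ) * entI (2 * k / (k + m : ℕ) - 1) =
      (k + m : ℕ) * log 2 + k * log k + m * log m - (k + m : ℕ) * log (k + m : ℕ) := by
  have hn : (0 : ℝ) < (k + m : ℕ) := by positivity
  have h_entI : ((k + m : ℕ) : ℝ) * entI (2 * k / (k + m : ℕ) - 1) =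
      k * log (2 * k / (k + m : ℕ)) + m * log (2 * m / (k + m : ℕ)) := by
    have h_one_sub : 1 - (2 * k / (k + m : ℕ) - 1 : ℝ) = 2 * m / (k + m : ℕ) := by
      field_simp; push_cast; ring
    rw [entI, add_sub_cancel, h_one_sub]
    field_simp
  rw [h_entI, mul_log_mul_div (Nat.cast_nonneg k) two_pos hn,
    mul_log_mul_div (Nat.cast_nonneg m) two_pos hn]
  push_cast; ring

lemma exp_neg_natCast_add_mul_entI (k m : ℕ) (h : k + m ≠ 0) :
    exp (-((k + m : ℕ) : ℝ) * entI (2 * k / (k + m : ℕ) - 1)) =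
      ((k + m : ℕ) : ℝ) ^ (k + m) / (2 ^ (k + m) * (k : ℝ) ^ k * (m : ℝ) ^ m) := by
  rw [neg_mul, natCast_add_mul_entI k m h, exp_neg, exp_sub, exp_add, exp_add, exp_nat_mul,
    exp_log two_pos, exp_natCast_mul_log_natCast, exp_natCast_mul_log_natCast,
    exp_natCast_mul_log_natCast]
  field_simp

theorem binomial_lower_bound :
    ∃ C : ℝ, 0 < C ∧ ∀ n k : ℕ, 1 ≤ n → k ≤ n →
      (1 / C) * ((2 : ℝ) ^ n / Real.sqrt n) *
          Real.exp (-(n : ℝ) * entI (2 * (k : ℝ) / (n : ℝ) - 1))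
        ≤ (n.choose k : ℝ) := by
  refine ⟨2 * exp 1 ^ 2 / √(2 * π), by positivity, fun n k hn hk => ?_⟩
  obtain ⟨m, rfl⟩ := Nat.exists_eq_add_of_le hk
  have h : k + m ≠ 0 := Nat.one_le_iff_ne_zero.mp hn
  rw [exp_neg_natCast_add_mul_entI k m h]
  refine le_of_eq_of_le ?_ (le_add_choose_stirling k m h)
  field_simp
end

section
/- There exists a constant C > 0 (independent of N₁, N₂ and all parameters entering only through the following expressions) such that for all integers N₁, N₂ ≥ 1 with N = N₁ + N₂: (1/C)·(2^N/√(N₁N₂))·exp(N·max_{μ ∈ A} f(μ₁,μ₂)) ≤ Z_N ≤ 2^N·(N₁+1)·(N₂+1)·exp(N·sup_{[−1,1]²} f), where A = {(μ₁,μ₂) : N₁(1+μ₁)/2 ∈ ℤ, N₂(1+μ₂)/2 ∈ ℤ, |μ₁| ≤ 1, |μ₂| ≤ 1} is the set of attainable pairs of block magnetizations. -/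
open Finset

/-- The value of a spin encoded by a Boolean. -/
noncomputable def spin (b : Bool) : ℝ := if b then 1 else -1

/-- The Hamiltonian density g(μ₁,μ₂). -/
noncomputable def gBip (J11 J12 J22 h1 h2 a1 a2 μ1 μ2 : ℝ) : ℝ :=
  (1 / 2) * (a1 ^ 2 * J11 * μ1 ^ 2 + 2 * a1 * a2 * J12 * μ1 * μ2 + a2 ^ 2 * J22 * μ2 ^ 2)
    + a1 * h1 * μ1 + a2 * h2 * μ2

/-- The pressure functional f(μ₁,μ₂) = β g(μ₁,μ₂) − α₁𝓘(μ₁) − α₂𝓘(μ₂). -/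
noncomputable def fBip (β J11 J12 J22 h1 h2 a1 a2 μ1 μ2 : ℝ) : ℝ :=
  β * gBip J11 J12 J22 h1 h2 a1 a2 μ1 μ2 - a1 * entI μ1 - a2 * entI μ2

/-- Magnetization of the first block (the first N₁ spins). -/
noncomputable def mag1 (N1 N2 : ℕ) (σ : Fin (N1 + N2) → Bool) : ℝ :=
  (1 / (N1 : ℝ)) * ∑ i : Fin (N1 + N2), if (i : ℕ) < N1 then spin (σ i) else 0

/-- Magnetization of the second block (the last N₂ spins). -/
noncomputable def mag2 (N1 N2 : ℕ) (σ : Fin (N1 + N2) → Bool) : ℝ :=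
  (1 / (N2 : ℝ)) * ∑ i : Fin (N1 + N2), if N1 ≤ (i : ℕ) then spin (σ i) else 0

/-- The partition function of the bipartite mean-field model. -/
noncomputable def Zbip (β J11 J12 J22 h1 h2 : ℝ) (N1 N2 : ℕ) : ℝ :=
  ∑ σ : Fin (N1 + N2) → Bool,
    Real.exp (β * ((N1 : ℝ) + N2) *
      gBip J11 J12 J22 h1 h2 ((N1 : ℝ) / ((N1 : ℝ) + N2)) ((N2 : ℝ) / ((N1 : ℝ) + N2))
        (mag1 N1 N2 σ) (mag2 N1 N2 σ))

/-!
Grouping the configurations by the numbers `k₁, k₂` of up spins in the two blocks writes `Z_N` as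
`∑ C(N₁,k₁) C(N₂,k₂) exp(β N g(μ₁,μ₂))` with `μᵢ = (2kᵢ - Nᵢ)/Nᵢ`, and
`W₁ W₂ exp(β N g(μ₁,μ₂)) = 2^N exp(N f(μ₁,μ₂))` for `Wᵢ = 2^{Nᵢ} exp(-Nᵢ 𝓘(μᵢ))`.
The binomial expansion of `n^n = (k + (n-k))^n` gives `C(n,k) ≤ W`, and Stirling's bounds on the
three factorials give `e⁻² W / √n ≤ C(n,k)`. The upper bound follows since there are
`(N₁+1)(N₂+1)` terms, each at most `2^N exp(N sup f)`; the lower bound keeps the single term at the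
given attainable `(μ₁, μ₂)`, with `C = e⁴`.
-/

open Real

namespace Nat

lemma cast_pow_self_pos (m : ℕ) : (0 : ℝ) < (m : ℝ) ^ m := by
  exact_mod_cast pow_self_pos

theorem choose_add_mul_pow_mul_pow_le (k j : ℕ) :
    (k + j).choose k * k ^ k * j ^ j ≤ (k + j) ^ (k + j) := by
  calc (k + j).choose k * k ^ k * j ^ j
      = k ^ k * j ^ (k + j - k) * (k + j).choose k := by rw [Nat.add_sub_cancel_left]; ring
    _ ≤ ∑ m ∈ range (k + j + 1), k ^ m * j ^ (k + j - m) * (k + j).choose m :=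
      single_le_sum (f := fun m => k ^ m * j ^ (k + j - m) * (k + j).choose m)
        (fun _ _ => Nat.zero_le _) (mem_range.2 (by omega))
    _ = (k + j) ^ (k + j) := (add_pow k j (k + j)).symm

-- `√(n + 1)` rather than `√n` keeps the bound true at `n = 0`.
theorem factorial_mul_exp_one_pow_le (n : ℕ) :
    (n ! : ℝ) * exp 1 ^ n ≤ exp 1 * √(n + 1) * n ^ n := by
  rcases n.eq_zero_or_pos with rfl | hn
  · simp [one_le_exp zero_le_one]
  obtain ⟨m, rfl⟩ := Nat.exists_eq_add_of_le' hn
  have hseq : Stirling.stirlingSeq (m + 1) ≤ exp 1 / √2 := by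
    simpa [Stirling.stirlingSeq_one] using Stirling.stirlingSeq'_antitone (Nat.zero_le m)
  rw [Stirling.stirlingSeq, div_le_iff₀ (by positivity)] at hseq
  have hsqrt : exp 1 / √2 * √(2 * ((m + 1 : ℕ) : ℝ)) = exp 1 * √((m + 1 : ℕ) : ℝ) := by
    rw [sqrt_mul zero_le_two]; field_simp
  calc ((m + 1)! : ℝ) * exp 1 ^ (m + 1)
      ≤ exp 1 * √((m + 1 : ℕ) : ℝ) * ((m + 1 : ℕ) / exp 1) ^ (m + 1) * exp 1 ^ (m + 1) := by
        gcongr; rwa [← hsqrt, mul_assoc]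
    _ = exp 1 * √((m + 1 : ℕ) : ℝ) * ((m + 1 : ℕ) : ℝ) ^ (m + 1) := by
        rw [div_pow]; field_simp
    _ ≤ exp 1 * √(((m + 1 : ℕ) : ℝ) + 1) * ((m + 1 : ℕ) : ℝ) ^ (m + 1) := by
        gcongr; linarith

theorem exp_neg_two_mul_add_pow_le_choose_mul (k j : ℕ) (h : 0 < k + j) :
    exp (-2) * ((k + j : ℕ) : ℝ) ^ (k + j)
      ≤ (k + j).choose k * √((k + j : ℕ) : ℝ) * ((k : ℝ) ^ k * (j : ℝ) ^ j) := by
  set n := k + j with hn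
  have hn0 : (0 : ℝ) < n := by exact_mod_cast h
  have hstirling : √(2 * π * n) * (n : ℝ) ^ n ≤ n ! * exp 1 ^ n := by
    have := Stirling.le_factorial_stirling n
    rwa [div_pow, mul_div_assoc', div_le_iff₀ (by positivity)] at this
  have hsqrt : √(((k : ℝ) + 1) * ((j : ℝ) + 1)) ≤ √(n : ℝ) * √(2 * π * n) := by
    rw [← sqrt_mul hn0.le]
    apply Real.sqrt_le_sqrt
    have hkj : (k : ℝ) + j = n := by rw [hn]; push_cast; ring
    have hn1 : (1 : ℝ) ≤ n := by exact_mod_cast h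
    have hkj_le : (k : ℝ) * j ≤ n * n :=
      mul_le_mul (by linarith [j.cast_nonneg (α := ℝ)]) (by linarith [k.cast_nonneg (α := ℝ)])
        j.cast_nonneg hn0.le
    nlinarith [pi_gt_three]
  have hsplit : (n ! : ℝ) * exp 1 ^ n
      = n.choose k * ((k ! : ℝ) * exp 1 ^ k) * ((j ! : ℝ) * exp 1 ^ j) := by
    rw [hn, pow_add, ← Nat.add_choose_mul_factorial_mul_factorial, Nat.choose_symm_add]
    push_cast
    ring
  have hmain : √(2 * π * n) * (n : ℝ) ^ n
      ≤ √(2 * π * n) * (exp 2 * (n.choose k * √(n : ℝ) * ((k : ℝ) ^ k * (j : ℝ) ^ j))) := by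
    calc √(2 * π * n) * (n : ℝ) ^ n ≤ n ! * exp 1 ^ n := hstirling
      _ = n.choose k * ((k ! : ℝ) * exp 1 ^ k) * ((j ! : ℝ) * exp 1 ^ j) := hsplit
      _ ≤ n.choose k * (exp 1 * √((k : ℝ) + 1) * (k : ℝ) ^ k)
            * (exp 1 * √((j : ℝ) + 1) * (j : ℝ) ^ j) := by
        gcongr n.choose k * ?_ * ?_ <;> exact factorial_mul_exp_one_pow_le _
      _ = exp 2 * n.choose k * √(((k : ℝ) + 1) * ((j : ℝ) + 1)) * ((k : ℝ) ^ k * (j : ℝ) ^ j) := by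
        rw [sqrt_mul (by positivity), show (2 : ℝ) = 1 + 1 by norm_num, exp_add]; ring
      _ ≤ exp 2 * n.choose k * (√(n : ℝ) * √(2 * π * n)) * ((k : ℝ) ^ k * (j : ℝ) ^ j) := by
        gcongr
      _ = _ := by ring
  rw [exp_neg, inv_mul_le_iff₀ (exp_pos 2)]
  exact le_of_mul_le_mul_left hmain (by positivity)

end Nat

noncomputable def magOfCount (n k : ℕ) : ℝ := (2 * k - n) / n

/-- `2 ^ n * exp (-(n * 𝓘 μ)) = exp (n * H ((1 + μ) / 2))` with `H` the binary entropy in nats: the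
Stirling approximation of the number of configurations of `n` spins with magnetization `μ`. -/
noncomputable def entropyWeight (n : ℕ) (μ : ℝ) : ℝ := 2 ^ n * exp (-(n * entI μ))

lemma entropyWeight_pos (n : ℕ) (μ : ℝ) : 0 < entropyWeight n μ := by
  unfold entropyWeight; positivity

lemma mul_log_two_mul_div {x n : ℝ} (hx : 0 ≤ x) (hn : 0 < n) :
    x * log (2 * x / n) = x * log 2 + x * log x - x * log n := by
  rcases hx.eq_or_lt with rfl | hx
  · simp
  · rw [log_div (by positivity) hn.ne', log_mul two_ne_zero hx.ne']
    ring

lemma natCast_mul_entI_magOfCount (k j : ℕ) (h : 0 < k + j) :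
    ((k + j : ℕ) : ℝ) * entI (magOfCount (k + j) k)
      = log (2 ^ (k + j) * ((k : ℝ) ^ k * (j : ℝ) ^ j) / ((k + j : ℕ) : ℝ) ^ (k + j)) := by
  have hn : (0 : ℝ) < (k + j : ℕ) := by exact_mod_cast h
  have hpow (m : ℕ) : (m : ℝ) ^ m ≠ 0 := (Nat.cast_pow_self_pos m).ne'
  have h1 : 1 + magOfCount (k + j) k = 2 * k / (k + j : ℕ) := by
    unfold magOfCount; field_simp; ring
  have h2 : 1 - magOfCount (k + j) k = 2 * j / (k + j : ℕ) := by
    unfold magOfCount; field_simp; push_cast; ring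
  rw [log_div (by simp [hpow]) (hpow _), log_mul (by positivity) (by simp [hpow]),
    log_mul (hpow _) (hpow _), log_pow, log_pow, log_pow, log_pow, entI, h1, h2]
  field_simp
  rw [mul_log_two_mul_div k.cast_nonneg hn, mul_log_two_mul_div j.cast_nonneg hn]
  push_cast
  ring

lemma entropyWeight_magOfCount (k j : ℕ) (h : 0 < k + j) :
    entropyWeight (k + j) (magOfCount (k + j) k)
      = ((k + j : ℕ) : ℝ) ^ (k + j) / ((k : ℝ) ^ k * (j : ℝ) ^ j) := by
  have := Nat.cast_pow_self_pos k; have := Nat.cast_pow_self_pos j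
  have := Nat.cast_pow_self_pos (k + j)
  rw [entropyWeight, natCast_mul_entI_magOfCount k j h, exp_neg, exp_log (by positivity)]
  field_simp

theorem Nat.choose_le_entropyWeight {n k : ℕ} (hk : k ≤ n) (hn : 0 < n) :
    (n.choose k : ℝ) ≤ entropyWeight n (magOfCount n k) := by
  obtain ⟨j, rfl⟩ := Nat.exists_eq_add_of_le hk
  rw [entropyWeight_magOfCount k j hn,
    le_div_iff₀ (mul_pos (Nat.cast_pow_self_pos k) (Nat.cast_pow_self_pos j)), ← mul_assoc]
  exact_mod_cast Nat.choose_add_mul_pow_mul_pow_le k j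

theorem Nat.exp_neg_two_mul_entropyWeight_le {n k : ℕ} (hk : k ≤ n) (hn : 0 < n) :
    exp (-2) * entropyWeight n (magOfCount n k) ≤ n.choose k * √(n : ℝ) := by
  obtain ⟨j, rfl⟩ := Nat.exists_eq_add_of_le hk
  rw [entropyWeight_magOfCount k j hn, ← mul_div_assoc,
    div_le_iff₀ (mul_pos (Nat.cast_pow_self_pos k) (Nat.cast_pow_self_pos j))]
  exact Nat.exp_neg_two_mul_add_pow_le_choose_mul k j hn

theorem Fintype.sum_fun_bool_card_filter {ι M : Type*} [Fintype ι] [DecidableEq ι]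
    [AddCommMonoid M] (F : ℕ → M) :
    ∑ τ : ι → Bool, F #{i | τ i} = ∑ k ∈ range (card ι + 1), (card ι).choose k • F k := by
  let e : (ι → Bool) ≃ Finset ι :=
    { toFun τ := {i | τ i}
      invFun s i := decide (i ∈ s)
      left_inv τ := by ext; simp
      right_inv s := by ext; simp }
  rw [← card_univ, ← sum_powerset_apply_card, powerset_univ]
  exact Fintype.sum_equiv e _ _ fun _ => rfl

lemma sum_spin_eq {ι : Type*} [Fintype ι] (τ : ι → Bool) :
    ∑ i, spin (τ i) = 2 * #{i | τ i} - Fintype.card ι := by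
  have hspin : ∀ b, spin b = 2 * (if b then 1 else 0) - 1 := by
    intro b; cases b <;> norm_num [spin]
  simp only [hspin, sum_sub_distrib, ← mul_sum, sum_boole, sum_const, card_univ, nsmul_one]

lemma mag1_append (N1 N2 : ℕ) (τ1 : Fin N1 → Bool) (τ2 : Fin N2 → Bool) :
    mag1 N1 N2 (Fin.append τ1 τ2) = magOfCount N1 #{i | τ1 i} := by
  rw [mag1, Fin.sum_univ_add]
  simp [sum_spin_eq, magOfCount, div_eq_inv_mul]

lemma mag2_append (N1 N2 : ℕ) (τ1 : Fin N1 → Bool) (τ2 : Fin N2 → Bool) :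
    mag2 N1 N2 (Fin.append τ1 τ2) = magOfCount N2 #{i | τ2 i} := by
  rw [mag2, Fin.sum_univ_add, sum_eq_zero fun i _ => if_neg (by simp)]
  simp [sum_spin_eq, magOfCount, div_eq_inv_mul]


theorem sum_mag1_mag2_eq_sum_choose (N1 N2 : ℕ) (F : ℝ → ℝ → ℝ) :
    ∑ σ : Fin (N1 + N2) → Bool, F (mag1 N1 N2 σ) (mag2 N1 N2 σ)
      = ∑ k ∈ range (N1 + 1) ×ˢ range (N2 + 1),
          (N1.choose k.1 * N2.choose k.2 : ℝ) * F (magOfCount N1 k.1) (magOfCount N2 k.2) := by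
  rw [← (Fin.appendEquiv N1 N2).sum_comp, Fintype.sum_prod_type, sum_product]
  simp only [Fin.appendEquiv, Equiv.coe_fn_mk, mag1_append, mag2_append]
  rw [Fintype.sum_fun_bool_card_filter fun k1 =>
    ∑ τ2 : Fin N2 → Bool, F (magOfCount N1 k1) (magOfCount N2 #{i | τ2 i})]
  simp only [Fintype.card_fin]
  refine sum_congr rfl fun k1 _ => ?_
  rw [Fintype.sum_fun_bool_card_filter fun k2 => F (magOfCount N1 k1) (magOfCount N2 k2),
    smul_sum]
  simp only [Fintype.card_fin, nsmul_eq_mul, mul_assoc]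

lemma magOfCount_mem_Icc {n k : ℕ} (hk : k ≤ n) : magOfCount n k ∈ Set.Icc (-1 : ℝ) 1 := by
  rcases n.eq_zero_or_pos with rfl | hn
  · simp [magOfCount]
  have hn' : (0 : ℝ) < n := by exact_mod_cast hn
  have hk' : (k : ℝ) ≤ n := by exact_mod_cast hk
  constructor
  · rw [magOfCount, le_div_iff₀ hn']; linarith [k.cast_nonneg (α := ℝ)]
  · rw [magOfCount, div_le_iff₀ hn']; linarith

lemma exists_magOfCount_eq {n : ℕ} {μ : ℝ} (hn : 0 < n) (hμ : |μ| ≤ 1)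
    (hint : ∃ z : ℤ, (n : ℝ) * (1 + μ) / 2 = z) : ∃ k ≤ n, magOfCount n k = μ := by
  obtain ⟨z, hz⟩ := hint
  obtain ⟨hμl, hμr⟩ := abs_le.1 hμ
  have hn' : (0 : ℝ) < n := by exact_mod_cast hn
  have hz0 : (0 : ℝ) ≤ z := by rw [← hz]; nlinarith
  lift z to ℕ using by exact_mod_cast hz0 with k
  refine ⟨k, ?_, ?_⟩
  · have : (k : ℝ) ≤ n := by push_cast at hz; rw [← hz]; nlinarith
    exact_mod_cast this
  · push_cast at hz
    rw [magOfCount, div_eq_iff hn'.ne', ← hz]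
    ring

lemma continuous_entI : Continuous entI := by
  have hmul := continuous_mul_log
  unfold entI
  fun_prop

lemma mul_fBip_div_add (β J11 J12 J22 h1 h2 a b μ1 μ2 : ℝ) (h : a + b ≠ 0) :
    (a + b) * fBip β J11 J12 J22 h1 h2 (a / (a + b)) (b / (a + b)) μ1 μ2
      = β * (a + b) * gBip J11 J12 J22 h1 h2 (a / (a + b)) (b / (a + b)) μ1 μ2
        - a * entI μ1 - b * entI μ2 := by
  unfold fBip
  field_simp

lemma bddAbove_fBip_image_Icc (β J11 J12 J22 h1 h2 a1 a2 : ℝ) :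
    BddAbove ((fun p : ℝ × ℝ => fBip β J11 J12 J22 h1 h2 a1 a2 p.1 p.2) ''
      (Set.Icc (-1 : ℝ) 1 ×ˢ Set.Icc (-1 : ℝ) 1)) := by
  refine (isCompact_Icc.prod isCompact_Icc).bddAbove_image (Continuous.continuousOn ?_)
  have := continuous_entI
  unfold fBip gBip
  fun_prop

lemma entropyWeight_mul_entropyWeight_div_le {N1 N2 k1 k2 : ℕ} (hk1 : k1 ≤ N1) (hk2 : k2 ≤ N2)
    (hN1 : 0 < N1) (hN2 : 0 < N2) :
    entropyWeight N1 (magOfCount N1 k1) * entropyWeight N2 (magOfCount N2 k2)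
        / (exp 4 * √((N1 : ℝ) * N2))
      ≤ N1.choose k1 * N2.choose k2 := by
  rw [div_le_iff₀ (by positivity), sqrt_mul (Nat.cast_nonneg _)]
  calc entropyWeight N1 (magOfCount N1 k1) * entropyWeight N2 (magOfCount N2 k2)
      = exp 4 * ((exp (-2) * entropyWeight N1 (magOfCount N1 k1))
          * (exp (-2) * entropyWeight N2 (magOfCount N2 k2))) := by
        rw [show (4 : ℝ) = 2 + 2 by norm_num, exp_add, exp_neg]
        field_simp
    _ ≤ exp 4 * ((N1.choose k1 * √(N1 : ℝ)) * (N2.choose k2 * √(N2 : ℝ))) := by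
        refine mul_le_mul_of_nonneg_left (mul_le_mul (Nat.exp_neg_two_mul_entropyWeight_le hk1 hN1)
          (Nat.exp_neg_two_mul_entropyWeight_le hk2 hN2) ?_ (by positivity)) (exp_pos 4).le
        exact mul_nonneg (exp_pos _).le (entropyWeight_pos _ _).le
    _ = _ := by ring

section Terms

variable (β J11 J12 J22 h1 h2 : ℝ)

lemma entropyWeight_mul_entropyWeight_mul_exp {N1 N2 : ℕ} (μ1 μ2 : ℝ) (h : 0 < N1 + N2) :
    entropyWeight N1 μ1 * entropyWeight N2 μ2 *
        exp (β * ((N1 : ℝ) + N2) *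
          gBip J11 J12 J22 h1 h2 ((N1 : ℝ) / ((N1 : ℝ) + N2)) ((N2 : ℝ) / ((N1 : ℝ) + N2)) μ1 μ2)
      = 2 ^ (N1 + N2) * exp (((N1 : ℝ) + N2) * fBip β J11 J12 J22 h1 h2
          ((N1 : ℝ) / ((N1 : ℝ) + N2)) ((N2 : ℝ) / ((N1 : ℝ) + N2)) μ1 μ2) := by
  have hN : (N1 : ℝ) + N2 ≠ 0 := by exact_mod_cast h.ne'
  rw [mul_fBip_div_add _ _ _ _ _ _ _ _ _ _ hN, entropyWeight, entropyWeight, sub_eq_add_neg,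
    sub_eq_add_neg, exp_add, exp_add, pow_add]
  ring

noncomputable def ZbipTerm (N1 N2 : ℕ) (k : ℕ × ℕ) : ℝ :=
  (N1.choose k.1 * N2.choose k.2 : ℝ) *
    exp (β * ((N1 : ℝ) + N2) * gBip J11 J12 J22 h1 h2 ((N1 : ℝ) / ((N1 : ℝ) + N2))
      ((N2 : ℝ) / ((N1 : ℝ) + N2)) (magOfCount N1 k.1) (magOfCount N2 k.2))

lemma ZbipTerm_nonneg (N1 N2 : ℕ) (k : ℕ × ℕ) : 0 ≤ ZbipTerm β J11 J12 J22 h1 h2 N1 N2 k := by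
  unfold ZbipTerm; positivity

lemma Zbip_eq_sum_ZbipTerm (N1 N2 : ℕ) :
    Zbip β J11 J12 J22 h1 h2 N1 N2
      = ∑ k ∈ range (N1 + 1) ×ˢ range (N2 + 1), ZbipTerm β J11 J12 J22 h1 h2 N1 N2 k :=
  sum_mag1_mag2_eq_sum_choose N1 N2 fun μ1 μ2 => exp (β * ((N1 : ℝ) + N2) * gBip J11 J12 J22 h1 h2
    ((N1 : ℝ) / ((N1 : ℝ) + N2)) ((N2 : ℝ) / ((N1 : ℝ) + N2)) μ1 μ2)

variable {N1 N2 k1 k2 : ℕ}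

lemma ZbipTerm_le (hk1 : k1 ≤ N1) (hk2 : k2 ≤ N2) (hN1 : 0 < N1) (hN2 : 0 < N2) :
    ZbipTerm β J11 J12 J22 h1 h2 N1 N2 (k1, k2)
      ≤ 2 ^ (N1 + N2) * exp (((N1 : ℝ) + N2) * fBip β J11 J12 J22 h1 h2
          ((N1 : ℝ) / ((N1 : ℝ) + N2)) ((N2 : ℝ) / ((N1 : ℝ) + N2))
          (magOfCount N1 k1) (magOfCount N2 k2)) :=
  (mul_le_mul_of_nonneg_right (mul_le_mul (Nat.choose_le_entropyWeight hk1 hN1)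
    (Nat.choose_le_entropyWeight hk2 hN2) (Nat.cast_nonneg _) (entropyWeight_pos _ _).le)
    (exp_pos _).le).trans_eq
    (entropyWeight_mul_entropyWeight_mul_exp β J11 J12 J22 h1 h2 _ _ (by omega))

lemma le_ZbipTerm (hk1 : k1 ≤ N1) (hk2 : k2 ≤ N2) (hN1 : 0 < N1) (hN2 : 0 < N2) :
    1 / exp 4 * (2 ^ (N1 + N2) / √((N1 : ℝ) * N2)) * exp (((N1 : ℝ) + N2) *
          fBip β J11 J12 J22 h1 h2 ((N1 : ℝ) / ((N1 : ℝ) + N2)) ((N2 : ℝ) / ((N1 : ℝ) + N2))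
          (magOfCount N1 k1) (magOfCount N2 k2))
      ≤ ZbipTerm β J11 J12 J22 h1 h2 N1 N2 (k1, k2) := by
  refine le_of_eq_of_le ?_ (mul_le_mul_of_nonneg_right
    (entropyWeight_mul_entropyWeight_div_le hk1 hk2 hN1 hN2) (exp_pos _).le)
  conv_rhs => rw [div_mul_eq_mul_div,
    entropyWeight_mul_entropyWeight_mul_exp β J11 J12 J22 h1 h2 _ _ (by omega)]
  ring

lemma le_Zbip (hk1 : k1 ≤ N1) (hk2 : k2 ≤ N2) (hN1 : 0 < N1) (hN2 : 0 < N2) :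
    1 / exp 4 * (2 ^ (N1 + N2) / √((N1 : ℝ) * N2)) * exp (((N1 : ℝ) + N2) *
          fBip β J11 J12 J22 h1 h2 ((N1 : ℝ) / ((N1 : ℝ) + N2)) ((N2 : ℝ) / ((N1 : ℝ) + N2))
          (magOfCount N1 k1) (magOfCount N2 k2))
      ≤ Zbip β J11 J12 J22 h1 h2 N1 N2 := by
  rw [Zbip_eq_sum_ZbipTerm]
  refine (le_ZbipTerm β J11 J12 J22 h1 h2 hk1 hk2 hN1 hN2).trans
    (single_le_sum (fun k _ => ZbipTerm_nonneg β J11 J12 J22 h1 h2 N1 N2 k) ?_)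
  exact mem_product.2 ⟨mem_range.2 (by omega), mem_range.2 (by omega)⟩

lemma Zbip_le_of_forall_fBip_le {M : ℝ} (hN1 : 0 < N1) (hN2 : 0 < N2)
    (hM : ∀ μ1 ∈ Set.Icc (-1 : ℝ) 1, ∀ μ2 ∈ Set.Icc (-1 : ℝ) 1, fBip β J11 J12 J22 h1 h2
      ((N1 : ℝ) / ((N1 : ℝ) + N2)) ((N2 : ℝ) / ((N1 : ℝ) + N2)) μ1 μ2 ≤ M) :
    Zbip β J11 J12 J22 h1 h2 N1 N2
      ≤ 2 ^ (N1 + N2) * ((N1 : ℝ) + 1) * ((N2 : ℝ) + 1) * exp (((N1 : ℝ) + N2) * M) := by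
  rw [Zbip_eq_sum_ZbipTerm]
  refine (sum_le_card_nsmul _ _ (2 ^ (N1 + N2) * exp (((N1 : ℝ) + N2) * M))
    fun k hk => ?_).trans_eq ?_
  · obtain ⟨hk1, hk2⟩ := mem_product.1 hk
    have hk1 : k.1 ≤ N1 := Nat.lt_succ_iff.1 (mem_range.1 hk1)
    have hk2 : k.2 ≤ N2 := Nat.lt_succ_iff.1 (mem_range.1 hk2)
    refine (ZbipTerm_le β J11 J12 J22 h1 h2 hk1 hk2 hN1 hN2).trans ?_
    gcongr
    exact hM _ (magOfCount_mem_Icc hk1) _ (magOfCount_mem_Icc hk2)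
  · rw [card_product, card_range, card_range, nsmul_eq_mul]
    push_cast
    ring

end Terms

theorem partition_function_bounds :
    ∃ C : ℝ, 0 < C ∧
      ∀ (J11 J12 J22 h1 h2 β : ℝ), 0 < β → ∀ N1 N2 : ℕ, 1 ≤ N1 → 1 ≤ N2 →
        ((∀ μ1 μ2 : ℝ, |μ1| ≤ 1 → |μ2| ≤ 1 →
            (∃ k1 : ℤ, (N1 : ℝ) * (1 + μ1) / 2 = (k1 : ℝ)) →
            (∃ k2 : ℤ, (N2 : ℝ) * (1 + μ2) / 2 = (k2 : ℝ)) →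
            (1 / C) * ((2 : ℝ) ^ (N1 + N2) / Real.sqrt ((N1 : ℝ) * N2)) *
                Real.exp (((N1 : ℝ) + N2) *
                  fBip β J11 J12 J22 h1 h2 ((N1 : ℝ) / ((N1 : ℝ) + N2))
                    ((N2 : ℝ) / ((N1 : ℝ) + N2)) μ1 μ2)
              ≤ Zbip β J11 J12 J22 h1 h2 N1 N2) ∧
          Zbip β J11 J12 J22 h1 h2 N1 N2
            ≤ (2 : ℝ) ^ (N1 + N2) * ((N1 : ℝ) + 1) * ((N2 : ℝ) + 1) *
                Real.exp (((N1 : ℝ) + N2) *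
                  sSup ((fun p : ℝ × ℝ =>
                      fBip β J11 J12 J22 h1 h2 ((N1 : ℝ) / ((N1 : ℝ) + N2))
                        ((N2 : ℝ) / ((N1 : ℝ) + N2)) p.1 p.2) ''
                    (Set.Icc (-1 : ℝ) 1 ×ˢ Set.Icc (-1 : ℝ) 1)))) := by
  refine ⟨exp 4, exp_pos 4, fun J11 J12 J22 h1 h2 β _ N1 N2 hN1 hN2 => ⟨?_, ?_⟩⟩
  · rintro μ1 μ2 hμ1 hμ2 hint1 hint2
    obtain ⟨k1, hk1, rfl⟩ := exists_magOfCount_eq hN1 hμ1 hint1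
    obtain ⟨k2, hk2, rfl⟩ := exists_magOfCount_eq hN2 hμ2 hint2
    exact le_Zbip β J11 J12 J22 h1 h2 hk1 hk2 hN1 hN2
  · refine Zbip_le_of_forall_fBip_le β J11 J12 J22 h1 h2 hN1 hN2 fun μ1 hμ1 μ2 hμ2 => ?_
    exact le_csSup (bddAbove_fBip_image_Icc ..) ⟨(μ1, μ2), ⟨hμ1, hμ2⟩, rfl⟩
end

section
/- A point (μ₁,μ₂) of the open square (−1,1)² is a critical point of f (i.e., both partial derivatives of f vanish at (μ₁,μ₂)) if and only if it satisfies the mean-field equations μ₁ = tanh(β(α₁J₁₁μ₁ + α₂J₁₂μ₂ + h₁)) and μ₂ = tanh(β(α₁J₁₂μ₁ + α₂J₂₂μ₂ + h₂)). -/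
open Real Set

theorem artanh_eq_half_log_sub {x : ℝ} (hx : x ∈ Ioo (-1) 1) :
    artanh x = (log (1 + x) - log (1 - x)) / 2 := by
  rw [artanh_eq_half_log (Ioo_subset_Icc_self hx),
    log_div (by linarith [hx.1]) (by linarith [hx.2])]
  ring

theorem hasDerivAt_entI {x : ℝ} (hx : x ∈ Ioo (-1) 1) : HasDerivAt entI (artanh x) x := by
  have hp : HasDerivAt (fun y => (1 + y) * log (1 + y)) (log (1 + x) + 1) x := by
    simpa using (hasDerivAt_mul_log (by linarith [hx.1] : 1 + x ≠ 0)).comp_const_add 1 x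
  have hm : HasDerivAt (fun y => (1 - y) * log (1 - y)) (-(log (1 - x) + 1)) x :=
    (hasDerivAt_mul_log (by linarith [hx.2] : 1 - x ≠ 0)).comp_const_sub 1 x
  refine ((hp.add hm).div_const 2).congr_deriv ?_
  rw [artanh_eq_half_log_sub hx]
  ring

theorem eq_tanh_iff_artanh_eq {μ t : ℝ} (hμ : μ ∈ Ioo (-1) 1) : μ = tanh t ↔ artanh μ = t := by
  constructor
  · rintro rfl
    exact artanh_tanh t
  · rintro rfl
    exact (tanh_artanh hμ).symm

theorem mul_sub_artanh_eq_zero_iff {a μ t : ℝ} (ha : a ≠ 0) (hμ : μ ∈ Ioo (-1) 1) :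
    a * (t - artanh μ) = 0 ↔ μ = tanh t := by
  rw [mul_eq_zero, or_iff_right ha, sub_eq_zero, eq_comm, eq_tanh_iff_artanh_eq hμ]

theorem fBip_swap (β J11 J12 J22 h1 h2 a1 a2 μ1 μ2 : ℝ) :
    fBip β J11 J12 J22 h1 h2 a1 a2 μ1 μ2 = fBip β J22 J12 J11 h2 h1 a2 a1 μ2 μ1 := by
  unfold fBip gBip
  ring

theorem hasDerivAt_gBip_fst (J11 J12 J22 h1 h2 a1 a2 μ1 μ2 : ℝ) :
    HasDerivAt (fun x => gBip J11 J12 J22 h1 h2 a1 a2 x μ2)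
      (a1 * (a1 * J11 * μ1 + a2 * J12 * μ2 + h1)) μ1 := by
  have hx := hasDerivAt_id' μ1
  have hquad := ((hx.pow 2).const_mul (a1 ^ 2 * J11)).add
    ((hx.const_mul (2 * a1 * a2 * J12)).mul_const μ2)
  exact ((((hquad.add_const (a2 ^ 2 * J22 * μ2 ^ 2)).const_mul (1 / 2)).add
    (hx.const_mul (a1 * h1))).add_const (a2 * h2 * μ2)).congr_deriv (by ring)

theorem hasDerivAt_fBip_fst (β J11 J12 J22 h1 h2 a1 a2 : ℝ) {μ1 : ℝ} (hμ1 : μ1 ∈ Ioo (-1) 1)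
    (μ2 : ℝ) :
    HasDerivAt (fun x => fBip β J11 J12 J22 h1 h2 a1 a2 x μ2)
      (a1 * (β * (a1 * J11 * μ1 + a2 * J12 * μ2 + h1) - artanh μ1)) μ1 := by
  refine ((((hasDerivAt_gBip_fst J11 J12 J22 h1 h2 a1 a2 μ1 μ2).const_mul β).sub
    ((hasDerivAt_entI hμ1).const_mul a1)).sub_const (a2 * entI μ2)).congr_deriv ?_
  ring

theorem hasDerivAt_fBip_snd (β J11 J12 J22 h1 h2 a1 a2 μ1 : ℝ) {μ2 : ℝ}
    (hμ2 : μ2 ∈ Ioo (-1) 1) :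
    HasDerivAt (fun y => fBip β J11 J12 J22 h1 h2 a1 a2 μ1 y)
      (a2 * (β * (a1 * J12 * μ1 + a2 * J22 * μ2 + h2) - artanh μ2)) μ2 := by
  simp only [fBip_swap β J11 J12 J22 h1 h2 a1 a2 μ1]
  convert hasDerivAt_fBip_fst β J22 J12 J11 h2 h1 a2 a1 hμ2 μ1 using 3
  ring

theorem critical_iff_mean_field_general
    (J11 J12 J22 h1 h2 β a1 a2 : ℝ)
    (ha1 : a1 ∈ Set.Ioo (0 : ℝ) 1) (ha2 : a2 ∈ Set.Ioo (0 : ℝ) 1)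
    (μ1 μ2 : ℝ) (hμ1 : μ1 ∈ Set.Ioo (-1 : ℝ) 1) (hμ2 : μ2 ∈ Set.Ioo (-1 : ℝ) 1) :
    (deriv (fun x => fBip β J11 J12 J22 h1 h2 a1 a2 x μ2) μ1 = 0 ∧
        deriv (fun y => fBip β J11 J12 J22 h1 h2 a1 a2 μ1 y) μ2 = 0) ↔
      (μ1 = Real.tanh (β * (a1 * J11 * μ1 + a2 * J12 * μ2 + h1)) ∧
        μ2 = Real.tanh (β * (a1 * J12 * μ1 + a2 * J22 * μ2 + h2))) := by
  rw [(hasDerivAt_fBip_fst β J11 J12 J22 h1 h2 a1 a2 hμ1 μ2).deriv,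
    (hasDerivAt_fBip_snd β J11 J12 J22 h1 h2 a1 a2 μ1 hμ2).deriv,
    mul_sub_artanh_eq_zero_iff ha1.1.ne' hμ1, mul_sub_artanh_eq_zero_iff ha2.1.ne' hμ2]

/-- A point of the open square is a critical point of f iff it satisfies
the mean-field equations. -/
theorem critical_iff_mean_field
    (J11 J12 J22 h1 h2 β a1 a2 : ℝ) (hβ : 0 < β)
    (ha1 : a1 ∈ Set.Ioo (0 : ℝ) 1) (ha2 : a2 ∈ Set.Ioo (0 : ℝ) 1) (hsum : a1 + a2 = 1)
    (μ1 μ2 : ℝ) (hμ1 : μ1 ∈ Set.Ioo (-1 : ℝ) 1) (hμ2 : μ2 ∈ Set.Ioo (-1 : ℝ) 1) :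
    (deriv (fun x => fBip β J11 J12 J22 h1 h2 a1 a2 x μ2) μ1 = 0 ∧
        deriv (fun y => fBip β J11 J12 J22 h1 h2 a1 a2 μ1 y) μ2 = 0) ↔
      (μ1 = Real.tanh (β * (a1 * J11 * μ1 + a2 * J12 * μ2 + h1)) ∧
        μ2 = Real.tanh (β * (a1 * J12 * μ1 + a2 * J22 * μ2 + h2))) :=
  critical_iff_mean_field_general J11 J12 J22 h1 h2 β a1 a2 ha1 ha2 μ1 μ2 hμ1 hμ2
end

section
/- For every real c > 1, the equation x = tanh(c·x) has exactly one solution x in the open interval (0,1); for every real c with 0 < c ≤ 1, the equation x = tanh(c·x) has no solution x in (0,1). -/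
/-!
Since `tanh` is strictly concave on `[0, ∞)` and vanishes at `0`, the slope `tanh t / t` is
strictly decreasing for `t > 0`, with `tanh t < t`. A positive solution of `x = tanh (c x)` is a
point `t = c x` where this slope equals `1 / c`, so there is at most one. For `c ≤ 1` there is
none because `tanh (c x) < c x ≤ x`. For `c > 1`, the function `tanh (c x) - x` is negative at
`x = 1` and nonnegative at `x = (c - 1) / c`, by the bound `t / (1 + t) ≤ tanh t`.
-/

open Real Set

theorem StrictConcaveOn.strictAntiOn_div_self {𝕜 : Type*} [Field 𝕜] [LinearOrder 𝕜]
    [IsStrictOrderedRing 𝕜] {f : 𝕜 → 𝕜} (hf : StrictConcaveOn 𝕜 (Ici 0) f) (h₀ : f 0 = 0) :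
    StrictAntiOn (fun x ↦ f x / x) (Ioi 0) := by
  intro x hx y hy hxy
  simpa [h₀] using hf.secant_strict_mono le_rfl (le_of_lt hx) (le_of_lt hy) hx.ne' hy.ne' hxy

namespace Real

theorem hasDerivAt_tanh (x : ℝ) : HasDerivAt tanh (cosh x ^ 2)⁻¹ x := by
  have h := (hasDerivAt_sinh x).div (hasDerivAt_cosh x) (cosh_pos x).ne'
  rw [show sinh / cosh = tanh from funext fun y ↦ (tanh_eq_sinh_div_cosh y).symm] at h
  refine h.congr_deriv ?_
  rw [← sq, ← sq, cosh_sq_sub_sinh_sq, one_div]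

theorem deriv_tanh : deriv tanh = fun x ↦ (cosh x ^ 2)⁻¹ :=
  funext fun x ↦ (hasDerivAt_tanh x).deriv

theorem continuous_tanh : Continuous tanh :=
  continuous_iff_continuousAt.2 fun x ↦ (hasDerivAt_tanh x).continuousAt

theorem strictConcaveOn_tanh : StrictConcaveOn ℝ (Ici 0) tanh := by
  refine StrictAntiOn.strictConcaveOn_of_deriv (convex_Ici 0) continuous_tanh.continuousOn ?_
  rw [interior_Ici, deriv_tanh]
  intro x hx y hy hxy
  have hcosh : cosh x < cosh y := cosh_strictMonoOn (mem_Ici_of_Ioi hx) (mem_Ici_of_Ioi hy) hxy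
  have := cosh_pos x
  show (cosh y ^ 2)⁻¹ < (cosh x ^ 2)⁻¹
  gcongr

theorem tanh_lt_self {x : ℝ} (hx : 0 < x) : tanh x < x := by
  have h := strictConcaveOn_tanh.slope_lt_of_hasDerivAt self_mem_Ici (mem_Ici_of_Ioi hx) hx
    (hasDerivAt_tanh 0)
  rwa [cosh_zero, one_pow, inv_one, slope_def_field, tanh_zero, sub_zero, sub_zero,
    div_lt_one hx] at h

theorem div_one_add_le_tanh {x : ℝ} (hx : 0 ≤ x) : x / (1 + x) ≤ tanh x := by
  have hexp : 1 + 2 * x ≤ exp x ^ 2 := by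
    rw [← exp_nat_mul]; push_cast; linarith [add_one_le_exp (2 * x)]
  rw [tanh_eq, exp_neg, div_le_div_iff₀ (by linarith) (by positivity)]
  field_simp
  nlinarith [exp_pos x]

theorem strictAntiOn_tanh_div_self : StrictAntiOn (fun x ↦ tanh x / x) (Ioi 0) :=
  strictConcaveOn_tanh.strictAntiOn_div_self tanh_zero

theorem eq_of_eq_tanh_mul {c x y : ℝ} (hc : 0 < c) (hx : 0 < x) (hy : 0 < y)
    (hxc : x = tanh (c * x)) (hyc : y = tanh (c * y)) : x = y := by
  have slope_eq : ∀ z, 0 < z → z = tanh (c * z) → tanh (c * z) / (c * z) = c⁻¹ := by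
    intro z hz hzc
    rw [← hzc]
    field_simp
  exact mul_left_cancel₀ hc.ne' <| strictAntiOn_tanh_div_self.injOn (mul_pos hc hx)
    (mul_pos hc hy) ((slope_eq x hx hxc).trans (slope_eq y hy hyc).symm)

theorem exists_mem_Ioo_eq_tanh_mul {c : ℝ} (hc : 1 < c) : ∃ x ∈ Ioo 0 1, x = tanh (c * x) := by
  have hc₀ : 0 < c := zero_lt_one.trans hc
  set f : ℝ → ℝ := fun x ↦ tanh (c * x) - x
  have hf : Continuous f := (continuous_tanh.comp (continuous_const_mul c)).sub continuous_id
  set x₀ := (c - 1) / c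
  have hx₀ : 0 < x₀ := div_pos (sub_pos.2 hc) hc₀
  have hfx₀ : 0 ≤ f x₀ := by
    have h := div_one_add_le_tanh (sub_pos.2 hc).le
    rw [add_sub_cancel] at h
    simp only [f, x₀, mul_div_cancel₀ _ hc₀.ne']
    linarith
  have hf₁ : f 1 < 0 := by simpa [f] using tanh_lt_one c
  obtain ⟨x, ⟨hx₀x, hx₁⟩, hfx⟩ := intermediate_value_Ico' (div_le_one_of_le₀ (by linarith)
    hc₀.le) hf.continuousOn ⟨hf₁, hfx₀⟩
  exact ⟨x, ⟨hx₀.trans_le hx₀x, hx₁⟩, (sub_eq_zero.1 hfx).symm⟩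

theorem tanh_mul_lt_self {c x : ℝ} (hc : 0 < c) (hc₁ : c ≤ 1) (hx : 0 < x) : tanh (c * x) < x :=
  (tanh_lt_self (mul_pos hc hx)).trans_le (mul_le_of_le_one_left hx.le hc₁)

end Real

theorem tanh_fixed_point (c : ℝ) :
    (1 < c → ∃! x : ℝ, x ∈ Set.Ioo (0 : ℝ) 1 ∧ x = Real.tanh (c * x)) ∧
    (0 < c → c ≤ 1 → ∀ x ∈ Set.Ioo (0 : ℝ) 1, x ≠ Real.tanh (c * x)) := by
  refine ⟨fun hc ↦ ?_, fun hc hc₁ x hx ↦ (tanh_mul_lt_self hc hc₁ hx.1).ne'⟩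
  obtain ⟨x, hx, hxc⟩ := exists_mem_Ioo_eq_tanh_mul hc
  exact ⟨x, ⟨hx, hxc⟩, fun y ⟨hy, hyc⟩ ↦
    eq_of_eq_tanh_mul (zero_lt_one.trans hc) hy.1 hx.1 hyc hxc⟩
end
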